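/- Consider a 2L × 2L matrix whose columns correspond to the edges of a bipartite cycle (s_1,c_1),(s_1,c_2),(s_2,c_2),(s_2,c_3),...,(s_L,c_L),(s_L,c_1), where the column of edge (s_j,c_i) has a 1 in the row of server s_j and entry −a_{j,i} in the row of customer c_i (a_{j,i} > 0), and all other entries 0. Then its determinant equals ± (a_{1,1} a_{2,2} ⋯ a_{L,L} − a_{1,2} a_{2,3} ⋯ a_{L,1}); in particular, the matrix is singular if and only if a_{1,1} a_{2,2} ⋯ a_{L,L} = a_{1,2} a_{2,3} ⋯ a_{L,1}. -/

import Mathlib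

open Finset Matrix

/-!
The server rows meet the columns of the edges `(s_j, c_j)` in an identity block, whose Schur
complement is the `L × L` matrix with `a` on the diagonal and `-b` on the cyclic subdiagonal. In the
Leibniz expansion of the latter only the identity and the `L`-cycle `i ↦ i + 1` pick up no zero
entry, so it equals `∏ a + sign(cycle) * ∏ (-b) = ∏ a + (-1) ^ (L - 1) * (-1) ^ L * ∏ b = ∏ a - ∏ b`.
-/

namespace Equiv.Perm

open Fin.NatCast in
theorem eq_one_or_eq_finRotate {n : ℕ} [NeZero n] {σ : Perm (Fin n)}
    (h : ∀ i, σ i = i ∨ σ i = i + 1) : σ = 1 ∨ σ = finRotate n := by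
  by_cases hfix : ∀ i, σ i = i
  · exact Or.inl (Equiv.ext hfix)
  right
  obtain ⟨i, hi⟩ := not_forall.mp hfix
  have hstep : ∀ k, σ k = k + 1 → σ (k + 1) = k + 1 + 1 := by
    intro k hk
    refine (h (k + 1)).elim (fun hk' => ?_) id
    have hloop : k + 1 = k := σ.injective (hk'.trans hk.symm)
    rw [hk', hloop, hloop]
  have hshift : ∀ m : ℕ, σ (i + m) = i + m + 1 := by
    intro m
    induction m with
    | zero => simpa using (h i).resolve_left hi
    | succ m ih => simpa [add_assoc] using hstep _ ih
  refine Equiv.ext fun k => ?_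
  simpa [finRotate_apply] using hshift (k - i).val

end Equiv.Perm

namespace Matrix

variable {R : Type*} [CommRing R] {n : ℕ}

def cyclicBidiagonal [NeZero n] (d e : Fin n → R) : Matrix (Fin n) (Fin n) R :=
  of fun i j => (if i = j then d j else 0) + (if i = j + 1 then e j else 0)

theorem det_cyclicBidiagonal (d e : Fin (n + 2) → R) :
    (cyclicBidiagonal d e).det = ∏ i, d i + (-1) ^ (n + 1) * ∏ i, e i := by
  have hne : (1 : Equiv.Perm (Fin (n + 2))) ≠ finRotate (n + 2) := fun h => by
    simpa using congr($h 0)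
  rw [det_apply, Fintype.sum_eq_add 1 _ hne]
  · simp [cyclicBidiagonal, finRotate_apply, sign_finRotate, Units.smul_def]
  rintro σ ⟨hσ1, hσrot⟩
  obtain ⟨i, hi⟩ : ∃ i, σ i ≠ i ∧ σ i ≠ i + 1 := by
    by_contra! h
    exact (Equiv.Perm.eq_one_or_eq_finRotate fun i => or_iff_not_imp_left.mpr (h i)).elim hσ1 hσrot
  rw [prod_eq_zero (mem_univ i) (by simp [cyclicBidiagonal, hi]), smul_zero]

theorem det_cyclicBidiagonal_neg (a b : Fin (n + 2) → R) :
    (cyclicBidiagonal a (-b)).det = ∏ i, a i - ∏ i, b i := by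
  rw [det_cyclicBidiagonal, Pi.neg_def, prod_neg, card_univ, Fintype.card_fin, ← mul_assoc,
    ← pow_add, show n + 1 + (n + 2) = 2 * (n + 1) + 1 by ring, pow_succ, pow_mul]
  ring

end Matrix

theorem cycle_matrix_det (L : ℕ) [NeZero L] (hL : 2 ≤ L)
    (a b : Fin L → ℝ) :
    let M : Matrix (Fin L ⊕ Fin L) (Fin L ⊕ Fin L) ℝ :=
      fun i e =>
        match i, e with
        | Sum.inl i, Sum.inl j => if i = j then 1 else 0
        | Sum.inr i, Sum.inl j => if i = j then -(a j) else 0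
        | Sum.inl i, Sum.inr j => if i = j then 1 else 0
        | Sum.inr i, Sum.inr j => if i = j + 1 then -(b j) else 0
    (M.det = ∏ j, a j - ∏ j, b j ∨ M.det = ∏ j, b j - ∏ j, a j) ∧
      (M.det = 0 ↔ ∏ j, a j = ∏ j, b j) := by
  intro M
  obtain ⟨n, rfl⟩ : ∃ n, L = n + 2 := ⟨L - 2, by omega⟩
  have hM : M = fromBlocks 1 1 (diagonal (-a)) (of fun i j => if i = j + 1 then -b j else 0) := by
    ext (i | i) (j | j) <;> by_cases hij : i = j <;> simp [M, one_apply, hij]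
  have hSchur : (of fun i j => if i = j + 1 then -b j else 0) - diagonal (-a) =
      cyclicBidiagonal a (-b) := by
    ext i j
    by_cases hij : i = j <;> simp [cyclicBidiagonal, hij]
  have hdet : M.det = ∏ j, a j - ∏ j, b j := by
    rw [hM, det_fromBlocks_one₁₁, Matrix.mul_one, hSchur, det_cyclicBidiagonal_neg]
  exact ⟨Or.inl hdet, by rw [hdet, sub_eq_zero]⟩
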